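/- Let f be a chief factor function and 𝔉 = C(f). Let G be a finite group with normal subgroups K ≤ N such that G/N ∈ 𝔉 and N/K is an internal direct product of subgroups N₁/K, …, N_t/K, each of which is a minimal normal subgroup of G/K. Let M be the subgroup generated by K together with all N_i for which f(N_i/K, G) = 0. Then M is a normal subgroup of G, G/M ∈ 𝔉, and M ≤ L for every normal subgroup L of G with K ≤ L and G/L ∈ 𝔉 (that is, M/K is the 𝔉-residual of G/K). -/

import Mathlib

/-! Common definitions: chief factors, G-isomorphism of chief factors, chief factor
functions, the class `C(f)`, classes of finite groups, formations, residuals,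
relative centralizers, internal direct products, minimal normal subgroups,
(K-)𝔉-subnormality. -/

/-- Conjugate of an element of a normal subgroup, as an element of the subgroup. -/
def normalConj {G : Type} [Group G] {H : Subgroup G} (hH : H.Normal) (g : G) (x : ↥H) : ↥H :=
  ⟨g * ↑x * g⁻¹, hH.conj_mem ↑x x.2 g⟩

/-- `H/K` is a chief factor of `G`: both are normal in `G`, `K < H`, and no normal
subgroup of `G` lies strictly between them. -/
def IsChiefFactor (G : Type) [Group G] (H K : Subgroup G) : Prop :=
  H.Normal ∧ K.Normal ∧ K < H ∧
    ∀ L : Subgroup G, L.Normal → K < L → L < H → False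

/-- The factors `H/K` and `M/N` are `G`-isomorphic (auxiliary version taking normality
proofs): there is a group isomorphism `φ : H/K ≃* M/N` commuting with the conjugation
action of `G` on both factors. -/
def GIsoAux (G : Type) [Group G] (H K M N : Subgroup G)
    (hH : H.Normal) (hK : K.Normal) (hM : M.Normal) (hN : N.Normal) : Prop :=
  haveI := hK.subgroupOf H
  haveI := hN.subgroupOf M
  ∃ φ : (↥H ⧸ K.subgroupOf H) ≃* (↥M ⧸ N.subgroupOf M),
    ∀ (g : G) (x : ↥H) (y : ↥M),
      φ (QuotientGroup.mk x) = QuotientGroup.mk y →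
        φ (QuotientGroup.mk (normalConj hH g x)) = QuotientGroup.mk (normalConj hM g y)

/-- The factors `H/K` and `M/N` are `G`-isomorphic. -/
def IsGIsomorphicFactors (G : Type) [Group G] (H K M N : Subgroup G) : Prop :=
  ∃ (hH : H.Normal) (hK : K.Normal) (hM : M.Normal) (hN : N.Normal),
    GIsoAux G H K M N hH hK hM hN

/-- The type of functions assigning a Boolean value (`true` = 1, `false` = 0) to each
finite group `G` and pair of subgroups `H`, `K` (thought of as the factor `H/K`). -/
abbrev ChiefFactorFun : Type 1 :=
  ∀ (G : Type) [Group G] [Finite G], Subgroup G → Subgroup G → Bool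

/-- `f` is a chief factor function: it is invariant under `G`-isomorphism of chief
factors and compatible with quotients. -/
structure IsChiefFactorFun (f : ChiefFactorFun) : Prop where
  iso_inv : ∀ (G : Type) [Group G] [Finite G] (H K M N : Subgroup G),
    IsChiefFactor G H K → IsChiefFactor G M N → IsGIsomorphicFactors G H K M N →
      f G H K = f G M N
  quot_inv : ∀ (G : Type) [Group G] [Finite G] (H K N : Subgroup G) [N.Normal],
    IsChiefFactor G H K → N ≤ K →
      f G H K = f (G ⧸ N) (H.map (QuotientGroup.mk' N)) (K.map (QuotientGroup.mk' N))

/-- `G ∈ C(f)`: every chief factor of `G` has value 1 under `f`. -/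
def CClass (f : ChiefFactorFun) (G : Type) [Group G] [Finite G] : Prop :=
  ∀ H K : Subgroup G, IsChiefFactor G H K → f G H K = true

/-- `G/L ∈ C(f)`, for a normal subgroup `L` of `G`. -/
def CClassQuot (f : ChiefFactorFun) (G : Type) [Group G] [Finite G]
    (L : Subgroup G) (hL : L.Normal) : Prop :=
  haveI := hL
  CClass f (G ⧸ L)

open scoped commutatorElement

/-- The centralizer `C_G(H/K) = {g : G | [g,h] ∈ K for all h ∈ H}` of the factor
`H/K` in `G` (for `K` normal in `G`). -/
def relCentralizer {G : Type} [Group G] (H K : Subgroup G) (hK : K.Normal) : Subgroup G where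
  carrier := {g : G | ∀ x ∈ H, ⁅g, x⁆ ∈ K}
  one_mem' := by
    intro x hx
    have h1 : ⁅(1 : G), x⁆ = 1 := by group
    rw [h1]; exact K.one_mem
  mul_mem' := by
    intro a b ha hb x hx
    have h1 : ⁅a * b, x⁆ = a * ⁅b, x⁆ * a⁻¹ * ⁅a, x⁆ := by group
    rw [h1]
    exact K.mul_mem (hK.conj_mem _ (hb x hx) a) (ha x hx)
  inv_mem' := by
    intro a ha x hx
    have h1 : ⁅a⁻¹, x⁆ = a⁻¹ * ⁅a, x⁆⁻¹ * a⁻¹⁻¹ := by group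
    rw [h1]
    exact hK.conj_mem _ (K.inv_mem (ha x hx)) a⁻¹

/-- A class of finite groups, given as a predicate on finite group types. -/
abbrev GroupClass : Type 1 := ∀ (G : Type) [Group G] [Finite G], Prop

/-- The class `𝔛` is non-empty. -/
def GroupClassNonempty (𝔛 : GroupClass) : Prop :=
  ∃ (G : Type) (g : Group G) (f : Finite G), @𝔛 G g f

/-- `G/L ∈ 𝔛`, for a normal subgroup `L` of `G`. -/
def QuotientIn (𝔛 : GroupClass) (G : Type) [Group G] [Finite G]
    (L : Subgroup G) (hL : L.Normal) : Prop :=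
  haveI := hL
  𝔛 (G ⧸ L)

/-- `𝔛` is a formation: a class of finite groups (closed under isomorphism) which is
closed under taking quotients and under subdirect products. -/
structure IsFormation (𝔛 : GroupClass) : Prop where
  iso_closed : ∀ (G : Type) [Group G] [Finite G] (H : Type) [Group H] [Finite H],
    (G ≃* H) → 𝔛 G → 𝔛 H
  quot_closed : ∀ (G : Type) [Group G] [Finite G] (N : Subgroup G) [N.Normal],
    𝔛 G → 𝔛 (G ⧸ N)
  subdirect_closed : ∀ (G : Type) [Group G] [Finite G] (N M : Subgroup G)
    [N.Normal] [M.Normal], N ⊓ M = ⊥ → 𝔛 (G ⧸ N) → 𝔛 (G ⧸ M) → 𝔛 G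

/-- `𝔛` is hereditary: closed under taking subgroups. -/
def IsHereditary (𝔛 : GroupClass) : Prop :=
  ∀ (G : Type) [Group G] [Finite G], 𝔛 G → ∀ H : Subgroup G, 𝔛 ↥H

/-- `R` is the `𝔛`-residual of `G`: the smallest normal subgroup of `G` whose
quotient lies in `𝔛`. -/
def IsResidual (𝔛 : GroupClass) (G : Type) [Group G] [Finite G] (R : Subgroup G) : Prop :=
  ∃ hR : R.Normal, QuotientIn 𝔛 G R hR ∧
    ∀ (L : Subgroup G) (hL : L.Normal), QuotientIn 𝔛 G L hL → R ≤ L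

/-- `A` is the internal direct product of the family of subgroups `B i`: each `B i`
is a subgroup of `A` normal in `A`, together they generate `A`, and each of them
intersects the subgroup generated by the others trivially. -/
def IsInternalDirectProduct {G : Type} [Group G] (A : Subgroup G)
    {ι : Type} (B : ι → Subgroup G) : Prop :=
  (∀ i, B i ≤ A) ∧ (∀ i, ((B i).subgroupOf A).Normal) ∧ (⨆ i, B i) = A ∧
    ∀ i, B i ⊓ (⨆ (j) (_ : j ≠ i), B j) = ⊥

/-- A non-abelian simple group. -/
def IsNonabelianSimple (S : Type) [Group S] : Prop :=
  IsSimpleGroup S ∧ ∃ x y : S, x * y ≠ y * x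

/-- `A` is a minimal normal subgroup of `G`. -/
def IsMinimalNormal {G : Type} [Group G] (A : Subgroup G) : Prop :=
  A.Normal ∧ A ≠ ⊥ ∧ ∀ B : Subgroup G, B.Normal → B ≤ A → B ≠ ⊥ → B = A

/-- `H` is a subnormal subgroup of `G`. -/
def IsSubnormal (G : Type) [Group G] (H : Subgroup G) : Prop :=
  ∃ (n : ℕ) (c : ℕ → Subgroup G), c 0 = H ∧ c n = ⊤ ∧
    ∀ i < n, c i ≤ c (i + 1) ∧ ((c i).subgroupOf (c (i + 1))).Normal

/-- One step in a K-`𝔉`-subnormal chain: `A ≤ B`, and either `A` is normal in `B` or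
`B / Core_B(A) ∈ 𝔉`. -/
def KFStep (𝔛 : GroupClass) {G : Type} [Group G] [Finite G] (A B : Subgroup G) : Prop :=
  A ≤ B ∧ ((A.subgroupOf B).Normal ∨ 𝔛 (↥B ⧸ (A.subgroupOf B).normalCore))

/-- `H` is a K-`𝔉`-subnormal subgroup of `G`. -/
def IsKFSubnormal (𝔛 : GroupClass) (G : Type) [Group G] [Finite G] (H : Subgroup G) : Prop :=
  ∃ (n : ℕ) (c : ℕ → Subgroup G), c 0 = H ∧ c n = ⊤ ∧
    ∀ i < n, KFStep 𝔛 (c i) (c (i + 1))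

/-- One step in an `𝔉`-subnormal chain (for hereditary `𝔉`): `A < B` and
`B / Core_B(A) ∈ 𝔉`. -/
def FStep (𝔛 : GroupClass) {G : Type} [Group G] [Finite G] (A B : Subgroup G) : Prop :=
  A < B ∧ 𝔛 (↥B ⧸ (A.subgroupOf B).normalCore)

/-- `H` is an `𝔉`-subnormal subgroup of `G` (for hereditary `𝔉`). -/
def IsFSubnormal (𝔛 : GroupClass) (G : Type) [Group G] [Finite G] (H : Subgroup G) : Prop :=
  H = ⊤ ∨ ∃ (n : ℕ) (c : ℕ → Subgroup G), c 0 = H ∧ c n = ⊤ ∧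
    ∀ i < n, FStep 𝔛 (c i) (c (i + 1))

/-! Each `Nᵢ/K` is a chief factor of `G`. A chief factor `A/C` of `f`-value 0 lies below
every normal `L ≥ C` with `G/L ∈ C(f)`: otherwise `AL/L` would be a chief factor of `G/L`,
`G`-isomorphic to `A/C`. Conversely, `G/M ∈ C(f)` because `N` is reached from `M` by adding the
factors `Nᵢ/K` of value 1 one at a time, and if `P/M` is a chief factor of value 1 such that all
chief factors above `P` have value 1, then so do all chief factors `H/K'` above `M`: either
`P ≤ K'`, or `H = PK'` and `H/K'` is `G`-isomorphic to `P/M`, or `H/K'` is `G`-isomorphic to the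
factor `HPK'/PK'` above `P`. -/

open Subgroup

section ChiefFactor

variable {G : Type} [Group G]

theorem IsChiefFactor.eq_of_lt_of_le {A C X : Subgroup G} (hch : IsChiefFactor G A C)
    (hX : X.Normal) (hCX : C < X) (hXA : X ≤ A) : X = A :=
  hXA.eq_or_lt.resolve_right (hch.2.2.2 X hX hCX)

theorem IsChiefFactor.inf_eq_of_not_le {A C B : Subgroup G} (hch : IsChiefFactor G A C)
    (hB : B.Normal) (hCB : C ≤ B) (hAB : ¬A ≤ B) : A ⊓ B = C := by
  have := hch.1
  refine (le_inf hch.2.2.1.le hCB).eq_or_lt.elim Eq.symm fun hlt => absurd ?_ hAB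
  exact inf_eq_left.mp (hch.eq_of_lt_of_le (normal_inf_normal A B) hlt inf_le_left)

theorem Subgroup.sup_inf_assoc_of_normal_of_le {A B X : Subgroup G} [B.Normal] (hBX : B ≤ X) :
    (B ⊔ A) ⊓ X = B ⊔ A ⊓ X := by
  apply SetLike.coe_injective
  rw [coe_inf, normal_mul, normal_mul, mul_inf_assoc _ _ _ hBX]

theorem IsChiefFactor.sup_right {A C B : Subgroup G} (hch : IsChiefFactor G A C)
    (hB : B.Normal) (hCB : C ≤ B) (hAB : ¬A ≤ B) : IsChiefFactor G (A ⊔ B) B := by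
  have := hch.1
  refine ⟨sup_normal A B, hB, lt_of_le_not_ge le_sup_right fun h => hAB (le_sup_left.trans h),
    fun X hX hBX hXAB => ?_⟩
  have := hX
  rcases (le_inf hch.2.2.1.le (hCB.trans hBX.le) : C ≤ A ⊓ X).eq_or_lt with hC | hC
  · have : X = B := by
      rw [← inf_eq_right.mpr hXAB.le, sup_comm, sup_inf_assoc_of_normal_of_le hBX.le, ← hC,
        sup_eq_left.mpr hCB]
    exact hBX.ne' this
  · have hAX : A ≤ X :=
      inf_eq_left.mp (hch.eq_of_lt_of_le (normal_inf_normal A X) hC inf_le_left)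
    exact hXAB.not_ge (sup_le hAX hBX.le)

variable {Q : Type} [Group Q] {φ : G →* Q}

theorem IsChiefFactor.map {H K : Subgroup G} (hch : IsChiefFactor G H K)
    (hφ : Function.Surjective φ) (hker : φ.ker ≤ K) :
    IsChiefFactor Q (H.map φ) (K.map φ) := by
  obtain ⟨hH, hK, hKH, hmax⟩ := hch
  have hK' : (K.map φ).comap φ = K := comap_map_eq_self hker
  have hH' : (H.map φ).comap φ = H := comap_map_eq_self (hker.trans hKH.le)
  refine ⟨hH.map φ hφ, hK.map φ hφ, ?_, fun X hX h1 h2 => hmax _ (hX.comap φ) ?_ ?_⟩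
  · rwa [← comap_lt_comap_of_surjective hφ, hK', hH']
  · rwa [← hK', comap_lt_comap_of_surjective hφ]
  · rwa [← hH', comap_lt_comap_of_surjective hφ]

theorem IsChiefFactor.comap {H K : Subgroup Q} (hch : IsChiefFactor Q H K)
    (hφ : Function.Surjective φ) : IsChiefFactor G (H.comap φ) (K.comap φ) := by
  obtain ⟨hH, hK, hKH, hmax⟩ := hch
  refine ⟨hH.comap φ, hK.comap φ, (comap_lt_comap_of_surjective hφ).2 hKH,
    fun X hX h1 h2 => hmax _ (hX.map φ hφ) ?_ ?_⟩
  all_goals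
    rwa [← comap_lt_comap_of_surjective hφ, comap_map_eq_self ((ker_le_comap φ K).trans h1.le)]

theorem IsMinimalNormal.isChiefFactor_bot {A : Subgroup G} (h : IsMinimalNormal A) :
    IsChiefFactor G A ⊥ :=
  ⟨h.1, normal_bot, bot_lt_iff_ne_bot.mpr h.2.1,
    fun X hX h1 h2 => h2.ne (h.2.2 X hX h2.le h1.ne')⟩

theorem IsChiefFactor.of_isMinimalNormal_map {A K : Subgroup G} [K.Normal] (hKA : K ≤ A)
    (h : IsMinimalNormal (A.map (QuotientGroup.mk' K))) : IsChiefFactor G A K := by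
  have := h.isChiefFactor_bot.comap (QuotientGroup.mk'_surjective K)
  rwa [comap_map_eq_self (by rwa [QuotientGroup.ker_mk']), MonoidHom.comap_bot,
    QuotientGroup.ker_mk'] at this

end ChiefFactor

theorem isGIsomorphicFactors_inf_sup {G : Type} [Group G] {A B : Subgroup G} (hA : A.Normal)
    (hB : B.Normal) : IsGIsomorphicFactors G A (A ⊓ B) (A ⊔ B) B := by
  refine ⟨hA, normal_inf_normal A B, sup_normal A B, hB, ?_⟩
  refine ⟨(QuotientGroup.quotientMulEquivOfEq (inf_subgroupOf_left B A)).trans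
    (QuotientGroup.quotientInfEquivProdNormalQuotient A B), fun g x y hxy => ?_⟩
  change QuotientGroup.mk (inclusion le_sup_left x) = (QuotientGroup.mk y : ↥(A ⊔ B) ⧸ _)
    at hxy
  change QuotientGroup.mk (inclusion le_sup_left (normalConj hA g x))
    = (QuotientGroup.mk _ : ↥(A ⊔ B) ⧸ _)
  rw [QuotientGroup.eq, mem_subgroupOf] at hxy ⊢
  convert hB.conj_mem _ hxy g using 1
  simp only [normalConj, coe_mul, coe_inv, coe_inclusion]
  group

def CClassAbove (f : ChiefFactorFun) (G : Type) [Group G] [Finite G] (M : Subgroup G) : Prop :=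
  ∀ H K : Subgroup G, IsChiefFactor G H K → M ≤ K → f G H K = true

theorem CClassAbove.mono {f : ChiefFactorFun} {G : Type} [Group G] [Finite G]
    {M M' : Subgroup G} (h : CClassAbove f G M) (hMM' : M ≤ M') : CClassAbove f G M' :=
  fun H K hch hM'K => h H K hch (hMM'.trans hM'K)

namespace IsChiefFactorFun

variable {f : ChiefFactorFun} (hf : IsChiefFactorFun f) {G : Type} [Group G] [Finite G]
include hf

theorem cClassAbove_iff (M : Subgroup G) [M.Normal] :
    CClassAbove f G M ↔ CClass f (G ⧸ M) := by
  have hsurj := QuotientGroup.mk'_surjective M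
  constructor
  · intro h H K hch
    have hMK : M ≤ K.comap (QuotientGroup.mk' M) := by
      simpa using ker_le_comap (QuotientGroup.mk' M) K
    rw [← map_comap_eq_self_of_surjective hsurj H, ← map_comap_eq_self_of_surjective hsurj K,
      ← hf.quot_inv G _ _ M (hch.comap hsurj) hMK]
    exact h _ _ (hch.comap hsurj) hMK
  · intro h H K hch hMK
    rw [hf.quot_inv G H K M hch hMK]
    exact h _ _ (hch.map hsurj (by rwa [QuotientGroup.ker_mk']))

theorem apply_sup_right {A C B : Subgroup G} (hch : IsChiefFactor G A C) (hB : B.Normal)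
    (hCB : C ≤ B) (hAB : ¬A ≤ B) : f G (A ⊔ B) B = f G A C := by
  have hiso := isGIsomorphicFactors_inf_sup hch.1 hB
  rw [hch.inf_eq_of_not_le hB hCB hAB] at hiso
  exact (hf.iso_inv G A C _ _ hch (hch.sup_right hB hCB hAB) hiso).symm

theorem le_of_cClassAbove {A C L : Subgroup G} (hch : IsChiefFactor G A C)
    (hfA : f G A C = false) (hL : L.Normal) (hCL : C ≤ L) (hLf : CClassAbove f G L) :
    A ≤ L := by
  by_contra hAL
  have := hLf _ _ (hch.sup_right hL hCL hAL) le_rfl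
  rw [hf.apply_sup_right hch hL hCL hAL, hfA] at this
  exact Bool.false_ne_true this

theorem cClassAbove_of_isChiefFactor {P M : Subgroup G} (hch : IsChiefFactor G P M)
    (hfP : f G P M = true) (hP : CClassAbove f G P) : CClassAbove f G M := by
  intro H K hHK hMK
  by_cases hPK : P ≤ K
  · exact hP H K hHK hPK
  have hK := hHK.2.1
  have hPKK := hch.sup_right hK hMK hPK
  by_cases hH : H ≤ P ⊔ K
  · rw [hPKK.eq_of_lt_of_le hHK.1 hHK.2.2.1 hH, hf.apply_sup_right hch hK hMK hPK, hfP]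
  · have hPK' : (P ⊔ K).Normal := @sup_normal _ _ _ _ hch.1 hK
    rw [← hf.apply_sup_right hHK hPK' le_sup_right hH]
    exact hP _ _ (hHK.sup_right hPK' le_sup_right hH) le_sup_left

theorem cClassAbove_of_le_sup_biSup {ι : Type*} {K M N : Subgroup G} (hM : M.Normal)
    (hKM : K ≤ M) {P : ι → Subgroup G} (s : Finset ι)
    (hP : ∀ i ∈ s, IsChiefFactor G (P i) K ∧ f G (P i) K = true)
    (hNM : N ≤ M ⊔ ⨆ i ∈ s, P i) (hN : CClassAbove f G N) : CClassAbove f G M := by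
  classical
  induction s using Finset.induction_on generalizing M with
  | empty => simpa using hN.mono hNM
  | insert a s _ ih =>
    obtain ⟨hPa, hfa⟩ := hP a (Finset.mem_insert_self a s)
    have hMPa : CClassAbove f G (M ⊔ P a) := by
      refine ih (@sup_normal _ _ _ _ hM hPa.1) (hKM.trans le_sup_left)
        (fun i hi => hP i (Finset.mem_insert_of_mem hi)) ?_
      rwa [Finset.iSup_insert, ← sup_assoc] at hNM
    by_cases hPM : P a ≤ M
    · rwa [sup_eq_left.mpr hPM] at hMPa
    · refine hf.cClassAbove_of_isChiefFactor (hPa.sup_right hM hKM hPM) ?_ (by rwa [sup_comm])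
      rw [hf.apply_sup_right hPa hM hKM hPM, hfa]

end IsChiefFactorFun

theorem stmt10_general (f : ChiefFactorFun) (hf : IsChiefFactorFun f)
    (G : Type) [Group G] [Finite G] (N K : Subgroup G) [hN : N.Normal] [hK : K.Normal]
    (hGN : CClass f (G ⧸ N))
    (t : ℕ) (Ni : Fin t → Subgroup G)
    (hKNi : ∀ i, K ≤ Ni i)
    (hmin : ∀ i, IsMinimalNormal ((Ni i).map (QuotientGroup.mk' K)))
    (hdp : IsInternalDirectProduct (N.map (QuotientGroup.mk' K))
      (fun i => (Ni i).map (QuotientGroup.mk' K)))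
    (M : Subgroup G)
    (hM : M = K ⊔ ⨆ (i : Fin t) (_ : f G (Ni i) K = false), Ni i) :
    ∃ hMn : M.Normal, CClassQuot f G M hMn ∧
      ∀ (L : Subgroup G) (hL : L.Normal), K ≤ L → CClassQuot f G L hL → M ≤ L := by
  have hchief (i : Fin t) : IsChiefFactor G (Ni i) K :=
    .of_isMinimalNormal_map (hKNi i) (hmin i)
  have : ∀ i, (Ni i).Normal := fun i => (hchief i).1
  have hMn : M.Normal := hM ▸ inferInstance
  have hKM : K ≤ M := hM ▸ le_sup_left
  have hNK : N ≤ K ⊔ ⨆ i, Ni i := by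
    have := le_comap_map (QuotientGroup.mk' K) N
    rwa [← hdp.2.2.1, ← Subgroup.map_iSup, comap_map_eq, QuotientGroup.ker_mk', sup_comm]
      at this
  refine ⟨hMn, (hf.cClassAbove_iff M).1 ?_, fun L hL hKL hLf => ?_⟩
  · refine hf.cClassAbove_of_le_sup_biSup hMn hKM
      (Finset.univ.filter fun i => f G (Ni i) K = true)
      (fun i hi => ⟨hchief i, (Finset.mem_filter.1 hi).2⟩) ?_ ((hf.cClassAbove_iff N).2 hGN)
    refine hNK.trans (sup_le (hKM.trans le_sup_left) (iSup_le fun i => ?_))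
    cases hfi : f G (Ni i) K
    · exact le_sup_of_le_left (hM ▸ le_sup_of_le_right (le_iSup₂_of_le i hfi le_rfl))
    · exact le_sup_of_le_right (le_iSup₂_of_le i (by simpa using hfi) le_rfl)
  · rw [hM]
    refine sup_le hKL (iSup₂_le fun i hi => hf.le_of_cClassAbove (hchief i) hi hL hKL ?_)
    exact (hf.cClassAbove_iff L).2 hLf

/-- Let `f` be a chief factor function and `𝔉 = C(f)`. Let `G` be a
finite group with normal subgroups `K ≤ N` such that `G/N ∈ 𝔉` and `N/K` is an
internal direct product of subgroups `N₁/K, …, N_t/K`, each a minimal normal subgroup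
of `G/K`. Let `M` be generated by `K` and all `N_i` with `f(N_i/K, G) = 0`. Then `M` is
normal in `G`, `G/M ∈ 𝔉`, and `M ≤ L` for every normal subgroup `L` of `G` with
`K ≤ L` and `G/L ∈ 𝔉`. -/
theorem stmt10 (f : ChiefFactorFun) (hf : IsChiefFactorFun f)
    (G : Type) [Group G] [Finite G] (N K : Subgroup G) [hN : N.Normal] [hK : K.Normal]
    (hKN : K ≤ N) (hGN : CClass f (G ⧸ N))
    (t : ℕ) (Ni : Fin t → Subgroup G)
    (hKNi : ∀ i, K ≤ Ni i) (hNiN : ∀ i, Ni i ≤ N)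
    (hmin : ∀ i, IsMinimalNormal ((Ni i).map (QuotientGroup.mk' K)))
    (hdp : IsInternalDirectProduct (N.map (QuotientGroup.mk' K))
      (fun i => (Ni i).map (QuotientGroup.mk' K)))
    (M : Subgroup G)
    (hM : M = K ⊔ ⨆ (i : Fin t) (_ : f G (Ni i) K = false), Ni i) :
    ∃ hMn : M.Normal, CClassQuot f G M hMn ∧
      ∀ (L : Subgroup G) (hL : L.Normal), K ≤ L → CClassQuot f G L hL → M ≤ L :=
  stmt10_general f hf G N K (hN := hN) (hK := hK) hGN t Ni hKNi hmin hdp M hM
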